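/- arXiv:1811.01342 — 2 statements merged into one kernel-verified Lean document; each statement's English description precedes it below -/
import Mathlib

section
/- Fix α, β ∈ (0,1), positive reals a, b, μ, and θ ∈ (π/2, π/(1+α)). For every nonzero complex z with |arg z| < θ, the value g(z) = (z + a·z^{1+α}) / (μ·(1 + b·z^β)) is nonzero and satisfies |1/g(z)| ≤ M_θ · μ · (|z|^{−1} + b·|z|^{β−1}) · min{1, |z|^{−α}/a}, where M_θ = 1/sin(π − θ). -/
/-- The symbol `g(z) = (z + a z^{1+α}) / (μ (1 + b z^β))` of the fractional
Oldroyd-B problem. Powers are principal complex powers. -/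
noncomputable def oldroydSymbol (a b μ α β : ℝ) (z : ℂ) : ℂ :=
  (z + (a : ℂ) * z ^ ((1 + α : ℝ) : ℂ)) / ((μ : ℂ) * (1 + (b : ℂ) * z ^ ((β : ℝ) : ℂ)))

/-!
Since `z + a z^{1+α} = z (1 + a z^α)`, the bound reduces to `|1 + b z^β| ≤ 1 + b |z|^β` and the
sector estimate `|1 + w| ≥ max 1 |w| · sin δ` for `|arg w| ≤ π - δ`, applied to `w = a z^α`, whose
argument `α arg z` stays in the sector because `α ≤ 1`. The same estimate for `w = b z^β` shows
that the denominator of `g` does not vanish.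
-/

open Complex Real

lemma norm_one_add_mul_exp_sq (R ψ : ℝ) :
    ‖1 + R * exp (ψ * I)‖ ^ 2 = (1 + R * Real.cos ψ) ^ 2 + (R * Real.sin ψ) ^ 2 := by
  rw [Complex.sq_norm, Complex.normSq_apply, add_re, add_im, one_re, one_im, re_ofReal_mul,
    im_ofReal_mul, exp_ofReal_mul_I_re, exp_ofReal_mul_I_im]
  ring

lemma sin_le_abs_sin_of_cos_neg {δ ψ : ℝ} (hδ : 0 ≤ δ) (hψ : |ψ| ≤ π - δ)
    (hcos : Real.cos ψ < 0) : Real.sin δ ≤ |Real.sin ψ| := by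
  have hright : π / 2 < |ψ| := by
    by_contra! h
    rw [← Real.cos_abs] at hcos
    exact hcos.not_ge (Real.cos_nonneg_of_neg_pi_div_two_le_of_le (by linarith [abs_nonneg ψ]) h)
  rw [Real.abs_sin_eq_sin_abs_of_abs_le_pi (by linarith), ← Real.sin_pi_sub |ψ|]
  exact Real.sin_le_sin_of_le_of_le_pi_div_two (by linarith [Real.pi_pos]) (by linarith)
    (by linarith)

lemma max_one_mul_sin_le_norm_one_add_mul_exp {R δ ψ : ℝ} (hR : 0 ≤ R) (hδ : 0 ≤ δ)
    (hψ : |ψ| ≤ π - δ) : max 1 R * Real.sin δ ≤ ‖1 + R * exp (ψ * I)‖ := by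
  have hpyth := Real.sin_sq_add_cos_sq ψ
  refine le_of_pow_le_pow_left₀ two_ne_zero (norm_nonneg _) ?_
  rw [norm_one_add_mul_exp_sq, mul_pow]
  rcases le_or_gt 0 (Real.cos ψ) with hcos | hcos
  · have hsin_sq : Real.sin δ ^ 2 ≤ 1 := by
      rw [sq_le_one_iff_abs_le_one]; exact Real.abs_sin_le_one δ
    have hmax_sq : max 1 R ^ 2 ≤ 1 + R ^ 2 := by
      rcases max_cases 1 R with ⟨h, _⟩ | ⟨h, _⟩ <;> rw [h] <;> nlinarith
    nlinarith [sq_nonneg (max 1 R)]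
  · -- `|1 + R e^{iψ}|² = (R + cos ψ)² + sin² ψ = (1 + R cos ψ)² + R² sin² ψ`
    have hsin := sin_le_abs_sin_of_cos_neg hδ hψ hcos
    have hsq : Real.sin δ ^ 2 ≤ Real.sin ψ ^ 2 := by
      rw [← sq_abs (Real.sin ψ)]
      exact pow_le_pow_left₀
        (Real.sin_nonneg_of_nonneg_of_le_pi hδ (by linarith [abs_nonneg ψ])) hsin 2
    rcases max_cases 1 R with ⟨h, _⟩ | ⟨h, _⟩ <;> rw [h]
    · nlinarith [sq_nonneg (R + Real.cos ψ)]
    · nlinarith [sq_nonneg (1 + R * Real.cos ψ), mul_le_mul_of_nonneg_left hsq (sq_nonneg R)]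

lemma ofReal_mul_cpow_ofReal_eq (c s : ℝ) (z : ℂ) :
    (c : ℂ) * z ^ (s : ℂ) = ((c * ‖z‖ ^ s : ℝ) : ℂ) * exp ((arg z * s : ℝ) * I) := by
  apply Complex.ext
  · rw [re_ofReal_mul, re_ofReal_mul, exp_ofReal_mul_I_re, cpow_ofReal_re]; ring
  · rw [im_ofReal_mul, im_ofReal_mul, exp_ofReal_mul_I_im, cpow_ofReal_im]; ring

lemma max_one_mul_sin_le_norm_one_add_mul_cpow {c s δ : ℝ} (hc : 0 ≤ c)
    (hs : s ∈ Set.Icc (0 : ℝ) 1) (hδ : 0 ≤ δ) {z : ℂ} (hz : |arg z| ≤ π - δ) :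
    max 1 (c * ‖z‖ ^ s) * Real.sin δ ≤ ‖1 + c * z ^ (s : ℂ)‖ := by
  rw [ofReal_mul_cpow_ofReal_eq]
  refine max_one_mul_sin_le_norm_one_add_mul_exp (by positivity) hδ ?_
  rw [abs_mul, abs_of_nonneg hs.1]
  nlinarith [abs_nonneg (arg z), hs.2]

lemma min_one_inv_eq_inv_max_one {x : ℝ} (hx : 0 < x) : min 1 x⁻¹ = (max 1 x)⁻¹ := by
  rcases le_total 1 x with h | h
  · rw [max_eq_right h, min_eq_right (inv_le_one_of_one_le₀ h)]
  · rw [max_eq_left h, inv_one, min_eq_left ((one_le_inv₀ hx).mpr h)]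

lemma oldroydSymbol_eq_of_ne_zero (a b μ α β : ℝ) {z : ℂ} (hz : z ≠ 0) :
    oldroydSymbol a b μ α β z =
      z * (1 + a * z ^ (α : ℂ)) / (μ * (1 + b * z ^ (β : ℂ))) := by
  rw [oldroydSymbol, ofReal_add, ofReal_one, cpow_add _ _ hz, cpow_one]
  ring

theorem oldroydSymbol_inv_bound_general (α β a b μ θ : ℝ)
    (hα : α ∈ Set.Ioo (0 : ℝ) 1) (hβ : β ∈ Set.Ioo (0 : ℝ) 1)
    (ha : 0 < a) (hb : 0 < b) (hμ : 0 < μ)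
    (hθ' : θ < Real.pi / (1 + α))
    (z : ℂ) (hz : z ≠ 0) (hargz : |Complex.arg z| < θ) :
    oldroydSymbol a b μ α β z ≠ 0 ∧
    ‖1 / oldroydSymbol a b μ α β z‖ ≤
      (1 / Real.sin (Real.pi - θ)) * μ *
        (‖z‖⁻¹ + b * ‖z‖ ^ (β - 1)) *
        min 1 (‖z‖ ^ (-α) / a) := by
  have hθπ : θ < π := hθ'.trans (div_lt_self pi_pos (by linarith [hα.1]))
  have hδ : 0 ≤ π - θ := by linarith
  have harg : |arg z| ≤ π - (π - θ) := by linarith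
  have hsin : 0 < Real.sin (π - θ) :=
    Real.sin_pos_of_pos_of_lt_pi (by linarith) (by linarith [(abs_nonneg _).trans_lt hargz])
  have hr : 0 < ‖z‖ := norm_pos_iff.mpr hz
  have hA := max_one_mul_sin_le_norm_one_add_mul_cpow ha.le (Set.Ioo_subset_Icc_self hα) hδ harg
  have hB := max_one_mul_sin_le_norm_one_add_mul_cpow hb.le (Set.Ioo_subset_Icc_self hβ) hδ harg
  have hA0 : 1 + (a : ℂ) * z ^ (α : ℂ) ≠ 0 :=
    norm_pos_iff.mp (lt_of_lt_of_le (by positivity) hA)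
  have hB0 : 1 + (b : ℂ) * z ^ (β : ℂ) ≠ 0 :=
    norm_pos_iff.mp (lt_of_lt_of_le (by positivity) hB)
  have hBle : ‖1 + (b : ℂ) * z ^ (β : ℂ)‖ ≤ 1 + b * ‖z‖ ^ β := by
    refine (norm_add_le _ _).trans_eq ?_
    rw [norm_one, norm_mul, norm_real, norm_cpow_real, Real.norm_of_nonneg hb.le]
  rw [oldroydSymbol_eq_of_ne_zero _ _ _ _ _ hz]
  refine ⟨div_ne_zero (mul_ne_zero hz hA0) (mul_ne_zero (ofReal_ne_zero.mpr hμ.ne') hB0), ?_⟩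
  calc ‖1 / (z * (1 + a * z ^ (α : ℂ)) / (μ * (1 + b * z ^ (β : ℂ))))‖
      = μ * ‖z‖⁻¹ * ‖1 + (b : ℂ) * z ^ (β : ℂ)‖ * ‖1 + (a : ℂ) * z ^ (α : ℂ)‖⁻¹ := by
        rw [one_div_div, norm_div, norm_mul, norm_mul, norm_real, Real.norm_of_nonneg hμ.le]
        field_simp
    _ ≤ μ * ‖z‖⁻¹ * (1 + b * ‖z‖ ^ β) * (max 1 (a * ‖z‖ ^ α) * Real.sin (π - θ))⁻¹ := by
        gcongr
    _ = _ := by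
        have hmin : min 1 (‖z‖ ^ (-α) / a) = (max 1 (a * ‖z‖ ^ α))⁻¹ := by
          rw [Real.rpow_neg hr.le, div_eq_mul_inv, ← mul_inv, mul_comm _ a,
            min_one_inv_eq_inv_max_one (by positivity)]
        rw [hmin, Real.rpow_sub hr, Real.rpow_one]
        field_simp

/-- Lower bound on `|g|` (equivalently upper bound on `|1/g|`) used in the
error analysis of the backward Euler scheme:
`|1/g(z)| ≤ M_θ μ (|z|⁻¹ + b|z|^{β-1}) min{1, |z|^{-α}/a}` with
`M_θ = 1 / sin (π - θ)`. -/
theorem oldroydSymbol_inv_bound (α β a b μ θ : ℝ)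
    (hα : α ∈ Set.Ioo (0 : ℝ) 1) (hβ : β ∈ Set.Ioo (0 : ℝ) 1)
    (ha : 0 < a) (hb : 0 < b) (hμ : 0 < μ)
    (hθ : Real.pi / 2 < θ) (hθ' : θ < Real.pi / (1 + α))
    (z : ℂ) (hz : z ≠ 0) (hargz : |Complex.arg z| < θ) :
    oldroydSymbol a b μ α β z ≠ 0 ∧
    ‖1 / oldroydSymbol a b μ α β z‖ ≤
      (1 / Real.sin (Real.pi - θ)) * μ *
        (‖z‖⁻¹ + b * ‖z‖ ^ (β - 1)) *
        min 1 (‖z‖ ^ (-α) / a) :=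
  oldroydSymbol_inv_bound_general α β a b μ θ hα hβ ha hb hμ hθ' z hz hargz
end

section
/- Fix α, β ∈ (0,1), positive reals a, b, μ, and θ ∈ (π/2, π/(1+α)). For every nonzero complex z with |arg z| < θ and every real λ > 0, one has 1 / (|z| · |g(z) + λ|) ≤ (μ / (sin(π−θ) · sin(π − (1+α)θ))) · (|z|^{−2} + b·|z|^{β−2}) · min{1, |z|^{−α}/a}, where g(z) = (z + a·z^{1+α}) / (μ·(1 + b·z^β)). -/
open Complex Real ComplexConjugate

/-- For `0 < Ψ ≤ π`, the closed sector `0 ≤ arg w ≤ Ψ` together with `0`, written as an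
intersection of two half-planes so that it is visibly closed under addition. -/
def upperSector (Ψ : ℝ) : Set ℂ :=
  {w | 0 ≤ w.im ∧ w.im * Real.cos Ψ ≤ w.re * Real.sin Ψ}

namespace upperSector

variable {Ψ : ℝ} {w w' : ℂ}

theorem add_mem (hw : w ∈ upperSector Ψ) (hw' : w' ∈ upperSector Ψ) :
    w + w' ∈ upperSector Ψ := by
  obtain ⟨him, hline⟩ := hw
  obtain ⟨him', hline'⟩ := hw'
  refine ⟨by simp only [add_im]; positivity, ?_⟩
  simp only [add_re, add_im, add_mul]
  linarith

theorem ofReal_mul_exp_mem {c x : ℝ} (hc : 0 ≤ c) (hx : 0 ≤ x) (hxΨ : x ≤ Ψ) (hΨ : Ψ ≤ π) :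
    (c : ℂ) * exp (x * I) ∈ upperSector Ψ := by
  have hsin : Real.sin (x - Ψ) ≤ 0 :=
    Real.sin_nonpos_of_nonpos_of_neg_pi_le (by linarith) (by linarith)
  rw [Real.sin_sub] at hsin
  refine ⟨?_, ?_⟩
  · rw [im_ofReal_mul, exp_ofReal_mul_I_im]
    exact mul_nonneg hc (Real.sin_nonneg_of_nonneg_of_le_pi hx (by linarith))
  · rw [im_ofReal_mul, re_ofReal_mul, exp_ofReal_mul_I_im, exp_ofReal_mul_I_re]
    nlinarith

theorem exp_mul_one_add_mul_exp_mem {φ x y A B : ℝ} (hA : 0 ≤ A) (hB : 0 ≤ B)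
    (hx : 0 ≤ x) (hy : 0 ≤ y) (hyφ : y ≤ φ) (hφx : φ + x ≤ Ψ) (hΨ : Ψ ≤ π) :
    exp (φ * I) * (1 + A * exp (x * I)) * (1 + B * exp ((-y : ℝ) * I)) ∈ upperSector Ψ := by
  have hexpand : exp (φ * I) * (1 + A * exp (x * I)) * (1 + B * exp ((-y : ℝ) * I)) =
      (1 : ℝ) * exp (φ * I) + A * exp ((φ + x : ℝ) * I) + B * exp ((φ - y : ℝ) * I)
        + (A * B : ℝ) * exp ((φ + x - y : ℝ) * I) := by
    simp only [ofReal_add, ofReal_sub, ofReal_neg, ofReal_mul, ofReal_one, add_mul, sub_mul,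
      neg_mul, Complex.exp_add, Complex.exp_sub, Complex.exp_neg]
    ring
  rw [hexpand]
  refine add_mem (add_mem (add_mem ?_ ?_) ?_) ?_ <;>
    exact ofReal_mul_exp_mem (by positivity) (by linarith) (by linarith) hΨ

theorem cos_mul_norm_le_re (hΨ : Ψ ∈ Set.Icc (π / 2) π) (hw : w ∈ upperSector Ψ) :
    Real.cos Ψ * ‖w‖ ≤ w.re := by
  obtain ⟨him, hline⟩ := hw
  have hcos : Real.cos Ψ ≤ 0 :=
    Real.cos_nonpos_of_pi_div_two_le_of_le hΨ.1 (by linarith [hΨ.2, pi_pos])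
  have hsin : 0 ≤ Real.sin Ψ :=
    Real.sin_nonneg_of_nonneg_of_le_pi (by linarith [hΨ.1, pi_pos]) hΨ.2
  have hnorm : ‖w‖ ^ 2 = w.re ^ 2 + w.im ^ 2 := by rw [Complex.sq_norm, normSq_apply]; ring
  have hpyth := Real.sin_sq_add_cos_sq Ψ
  rcases le_or_gt 0 w.re with hre | hre
  · nlinarith [norm_nonneg w]
  · have hsq : w.re ^ 2 * Real.sin Ψ ^ 2 ≤ w.im ^ 2 * Real.cos Ψ ^ 2 := by
      nlinarith [mul_nonneg (neg_nonneg.2 hre.le) hsin, mul_nonneg him (neg_nonneg.2 hcos)]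
    nlinarith [mul_nonneg (neg_nonneg.2 hcos) (norm_nonneg w)]

theorem cos_mul_norm_le_re_of_conj_mem (hΨ : Ψ ∈ Set.Icc (π / 2) π)
    (hw : conj w ∈ upperSector Ψ) : Real.cos Ψ * ‖w‖ ≤ w.re := by
  simpa using cos_mul_norm_le_re hΨ hw

end upperSector

theorem sin_mul_norm_le_norm_add_ofReal {Ψ t : ℝ} {w : ℂ} (hw : Real.cos Ψ * ‖w‖ ≤ w.re)
    (ht : 0 ≤ t) : Real.sin Ψ * ‖w‖ ≤ ‖w + t‖ := by
  have hsq : ‖w + t‖ ^ 2 = ‖w‖ ^ 2 + 2 * t * w.re + t ^ 2 := by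
    simp only [Complex.sq_norm, normSq_apply, add_re, add_im, ofReal_re, ofReal_im]; ring
  have hpyth := Real.sin_sq_add_cos_sq Ψ
  have : (Real.sin Ψ * ‖w‖) ^ 2 ≤ ‖w + t‖ ^ 2 := by
    nlinarith [sq_nonneg (t + Real.cos Ψ * ‖w‖), mul_le_mul_of_nonneg_left hw ht]
  exact le_of_sq_le_sq this (norm_nonneg _)

theorem max_one_norm_le_norm_one_add {w : ℂ} (hw : 0 ≤ w.re) : max 1 ‖w‖ ≤ ‖1 + w‖ := by
  have hsq : ‖1 + w‖ ^ 2 = 1 + 2 * w.re + ‖w‖ ^ 2 := by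
    simp only [Complex.sq_norm, normSq_apply, add_re, add_im, one_re, one_im]; ring
  apply max_le <;> nlinarith [norm_nonneg (1 + w), norm_nonneg w]

theorem cpow_ofReal_eq_mul_exp (z : ℂ) (s : ℝ) :
    z ^ (s : ℂ) = ((‖z‖ ^ s : ℝ) : ℂ) * exp ((arg z * s : ℝ) * I) := by
  rw [cpow_ofReal, exp_mul_I, ← ofReal_cos, ← ofReal_sin]

theorem conj_exp_ofReal_mul_I (x : ℝ) : conj (exp (x * I)) = exp ((-x : ℝ) * I) := by
  rw [← exp_conj, map_mul, conj_ofReal, conj_I, ofReal_neg, neg_mul, mul_neg]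

theorem re_cpow_ofReal_nonneg {z : ℂ} {s : ℝ} (h : |arg z * s| ≤ π / 2) :
    0 ≤ (z ^ (s : ℂ)).re := by
  rw [cpow_ofReal_re]
  exact mul_nonneg (by positivity) (Real.cos_nonneg_of_mem_Icc (abs_le.1 h))

theorem one_add_mul_cpow_ne_zero {B s : ℝ} (z : ℂ) (hB : 0 ≤ B) (h : |arg z * s| < π) :
    1 + B * z ^ (s : ℂ) ≠ 0 := by
  intro hzero
  have hre := congrArg re hzero
  have him := congrArg im hzero
  simp only [add_re, add_im, one_re, one_im, re_ofReal_mul, im_ofReal_mul, cpow_ofReal_re,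
    cpow_ofReal_im, zero_re, zero_im, zero_add] at hre him
  obtain ⟨hlo, hhi⟩ := abs_lt.1 h
  have hc : 0 ≤ B * ‖z‖ ^ s := by positivity
  rw [← mul_assoc] at hre him
  rcases mul_eq_zero.1 him with hc₀ | hsin
  · rw [hc₀, zero_mul, add_zero] at hre
    exact one_ne_zero hre
  · rw [Real.sin_eq_zero_iff_of_lt_of_lt hlo hhi] at hsin
    rw [hsin, Real.cos_zero] at hre
    linarith

theorem cos_mul_norm_le_re_mul_one_add_cpow_div {α β Ψ A B : ℝ} {z : ℂ} (hα : 0 ≤ α)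
    (hβ₀ : 0 ≤ β) (hβ₁ : β ≤ 1) (hA : 0 ≤ A) (hB : 0 ≤ B) (harg : (1 + α) * |arg z| ≤ Ψ)
    (hΨ : Ψ ∈ Set.Icc (π / 2) π) :
    Real.cos Ψ * ‖z * (1 + A * z ^ (α : ℂ)) / (1 + B * z ^ (β : ℂ))‖ ≤
      (z * (1 + A * z ^ (α : ℂ)) / (1 + B * z ^ (β : ℂ))).re := by
  set v := 1 + B * z ^ (β : ℂ)
  set φ := arg z
  set P := exp (φ * I) * (1 + (A * ‖z‖ ^ α : ℝ) * exp ((φ * α : ℝ) * I)) *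
    (1 + (B * ‖z‖ ^ β : ℝ) * exp ((-(φ * β) : ℝ) * I))
  have hdiv : z * (1 + A * z ^ (α : ℂ)) / v = ((normSq v)⁻¹ * ‖z‖ : ℝ) * P := by
    -- `u / v = u * conj v / |v|²`, and `u * conj v = |z| P` in polar coordinates
    rw [div_eq_mul_inv, inv_def]
    simp only [v, P, cpow_ofReal_eq_mul_exp, map_add, map_mul, map_one, conj_ofReal,
      conj_exp_ofReal_mul_I]
    nth_rewrite 1 [← norm_mul_exp_arg_mul_I z]
    push_cast
    ring
  have hP : Real.cos Ψ * ‖P‖ ≤ P.re := by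
    rcases le_or_gt 0 φ with hφ | hφ
    · rw [abs_of_nonneg hφ] at harg
      refine upperSector.cos_mul_norm_le_re hΨ (upperSector.exp_mul_one_add_mul_exp_mem
        (by positivity) (by positivity) (by positivity) (by positivity) ?_ ?_ (by linarith [hΨ.2]))
      · nlinarith
      · nlinarith
    · rw [abs_of_neg hφ] at harg
      refine upperSector.cos_mul_norm_le_re_of_conj_mem hΨ ?_
      simp only [P, map_mul, map_add, map_one, conj_ofReal, conj_exp_ofReal_mul_I]
      refine upperSector.exp_mul_one_add_mul_exp_mem
        (by positivity) (by positivity) (by nlinarith) (by nlinarith) ?_ ?_ (by linarith [hΨ.2])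
      · nlinarith
      · nlinarith
  have hc : 0 ≤ (normSq v)⁻¹ * ‖z‖ := mul_nonneg (inv_nonneg.2 (normSq_nonneg v)) (norm_nonneg z)
  rw [hdiv, re_ofReal_mul, norm_mul, norm_real, Real.norm_of_nonneg hc, mul_left_comm]
  exact mul_le_mul_of_nonneg_left hP hc

theorem norm_mul_max_le_norm_mul_one_add_cpow_div {α β A B : ℝ} {z : ℂ} (hA : 0 ≤ A)
    (hB : 0 ≤ B) (harg : |arg z * α| ≤ π / 2) (hv : 1 + B * z ^ (β : ℂ) ≠ 0) :
    ‖z‖ * max 1 (A * ‖z‖ ^ α) ≤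
      ‖z * (1 + A * z ^ (α : ℂ)) / (1 + B * z ^ (β : ℂ))‖ * (1 + B * ‖z‖ ^ β) := by
  have hnum : max 1 (A * ‖z‖ ^ α) ≤ ‖1 + A * z ^ (α : ℂ)‖ := by
    have := max_one_norm_le_norm_one_add (w := A * z ^ (α : ℂ))
      (by rw [re_ofReal_mul]; exact mul_nonneg hA (re_cpow_ofReal_nonneg harg))
    rwa [norm_mul, norm_real, norm_cpow_real, Real.norm_of_nonneg hA] at this
  have hden : ‖1 + B * z ^ (β : ℂ)‖ ≤ 1 + B * ‖z‖ ^ β := by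
    refine (norm_add_le _ _).trans_eq ?_
    rw [norm_one, norm_mul, norm_real, norm_cpow_real, Real.norm_of_nonneg hB]
  calc ‖z‖ * max 1 (A * ‖z‖ ^ α) ≤ ‖z * (1 + A * z ^ (α : ℂ))‖ := by
        rw [norm_mul]; exact mul_le_mul_of_nonneg_left hnum (norm_nonneg z)
    _ = ‖z * (1 + A * z ^ (α : ℂ)) / (1 + B * z ^ (β : ℂ))‖ * ‖1 + B * z ^ (β : ℂ)‖ := by
        rw [norm_div, div_mul_cancel₀ _ (norm_ne_zero_iff.2 hv)]
    _ ≤ _ := mul_le_mul_of_nonneg_left hden (norm_nonneg _)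

theorem ofReal_mul_oldroydSymbol {a b μ α β : ℝ} {z : ℂ} (hz : z ≠ 0) (hμ : μ ≠ 0) :
    μ * oldroydSymbol a b μ α β z = z * (1 + a * z ^ (α : ℂ)) / (1 + b * z ^ (β : ℂ)) := by
  rw [oldroydSymbol, ← mul_div_assoc, mul_div_mul_left _ _ (ofReal_ne_zero.2 hμ), ofReal_add,
    ofReal_one, cpow_add _ _ hz, cpow_one, mul_one_add, mul_left_comm]

theorem sin_mul_norm_mul_max_le_norm_oldroydSymbol_add {α β a b μ θ lam : ℝ} {z : ℂ}
    (hα : 0 ≤ α) (hβ₀ : 0 ≤ β) (hβ₁ : β ≤ 1) (ha : 0 ≤ a) (hb : 0 ≤ b) (hμ : 0 < μ)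
    (hlam : 0 ≤ lam) (hθ : π / 2 ≤ θ) (hθ' : (1 + α) * θ ≤ π) (hz : z ≠ 0)
    (harg : |arg z| < θ) :
    Real.sin ((1 + α) * θ) * (‖z‖ * max 1 (a * ‖z‖ ^ α)) ≤
      μ * (1 + b * ‖z‖ ^ β) * ‖oldroydSymbol a b μ α β z + lam‖ := by
  have hΨ : (1 + α) * θ ∈ Set.Icc (π / 2) π :=
    ⟨by nlinarith [mul_nonneg hα (by linarith [pi_pos] : (0 : ℝ) ≤ θ)], hθ'⟩
  have hv : 1 + b * z ^ (β : ℂ) ≠ 0 := one_add_mul_cpow_ne_zero z hb <| by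
    rw [abs_mul, abs_of_nonneg hβ₀]; nlinarith [abs_nonneg (arg z)]
  have hαarg : |arg z * α| ≤ π / 2 := by
    rw [abs_mul, abs_of_nonneg hα]; nlinarith [abs_nonneg (arg z)]
  have hw := ofReal_mul_oldroydSymbol (a := a) (b := b) (α := α) (β := β) hz hμ.ne'
  have hsector := cos_mul_norm_le_re_mul_one_add_cpow_div hα hβ₀ hβ₁ ha hb
    (by nlinarith [abs_nonneg (arg z)]) hΨ
  have hres : Real.sin ((1 + α) * θ) * (μ * ‖oldroydSymbol a b μ α β z‖) ≤
      μ * ‖oldroydSymbol a b μ α β z + lam‖ := by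
    have := sin_mul_norm_le_norm_add_ofReal hsector (mul_nonneg hμ.le hlam)
    rwa [← hw, ofReal_mul, ← mul_add, norm_mul, norm_mul, norm_real,
      Real.norm_of_nonneg hμ.le] at this
  have hN := norm_mul_max_le_norm_mul_one_add_cpow_div ha hb hαarg hv
  rw [← hw, norm_mul, norm_real, Real.norm_of_nonneg hμ.le] at hN
  have hsin : 0 ≤ Real.sin ((1 + α) * θ) :=
    Real.sin_nonneg_of_nonneg_of_le_pi (by linarith [hΨ.1, pi_pos]) hΨ.2
  calc Real.sin ((1 + α) * θ) * (‖z‖ * max 1 (a * ‖z‖ ^ α))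
      ≤ Real.sin ((1 + α) * θ) * (μ * ‖oldroydSymbol a b μ α β z‖) * (1 + b * ‖z‖ ^ β) := by
        rw [mul_assoc]; exact mul_le_mul_of_nonneg_left hN hsin
    _ ≤ μ * ‖oldroydSymbol a b μ α β z + lam‖ * (1 + b * ‖z‖ ^ β) :=
        mul_le_mul_of_nonneg_right hres (by positivity)
    _ = _ := by ring

theorem inv_max_one_le_min_one_rpow_neg_div {a r : ℝ} (ha : 0 < a) (hr : 0 < r) (α : ℝ) :
    (max 1 (a * r ^ α))⁻¹ ≤ min 1 (r ^ (-α) / a) := by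
  refine le_min (inv_le_one_of_one_le₀ (le_max_left _ _)) ?_
  rw [rpow_neg hr.le, div_eq_mul_inv, ← mul_inv, mul_comm]
  exact inv_anti₀ (by positivity) (le_max_right _ _)

/-- Scalar form of the bound on `‖g(z)⁻¹ Ê(z)‖` from the proof of Theorem 2.1:
for `z ∈ Σ_θ` and `λ > 0`,
`1/(|z| |g(z)+λ|) ≤ (μ/(sin(π-θ) sin(π-(1+α)θ))) (|z|^{-2} + b|z|^{β-2}) min{1, |z|^{-α}/a}`. -/
theorem oldroydSymbol_smooth_bound (α β a b μ θ : ℝ)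
    (hα : α ∈ Set.Ioo (0 : ℝ) 1) (hβ : β ∈ Set.Ioo (0 : ℝ) 1)
    (ha : 0 < a) (hb : 0 < b) (hμ : 0 < μ)
    (hθ : Real.pi / 2 < θ) (hθ' : θ < Real.pi / (1 + α))
    (z : ℂ) (hz : z ≠ 0) (hargz : |Complex.arg z| < θ)
    (lam : ℝ) (hlam : 0 < lam) :
    1 / (‖z‖ * ‖oldroydSymbol a b μ α β z + (lam : ℂ)‖) ≤
      (μ / (Real.sin (Real.pi - θ) * Real.sin (Real.pi - (1 + α) * θ))) *
        (‖z‖ ^ (-2 : ℝ) + b * ‖z‖ ^ (β - 2)) *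
        min 1 (‖z‖ ^ (-α) / a) := by
  obtain ⟨hα₀, -⟩ := hα
  obtain ⟨hβ₀, hβ₁⟩ := hβ
  have hr : 0 < ‖z‖ := norm_pos_iff.2 hz
  have hθ₀ : 0 < θ := by linarith [pi_pos]
  have hΨ : (1 + α) * θ < π := (lt_div_iff₀' (by linarith)).1 hθ'
  have hθΨ : θ < (1 + α) * θ := by nlinarith
  have hsinθ : 0 < Real.sin θ := Real.sin_pos_of_pos_of_lt_pi hθ₀ (hθΨ.trans hΨ)
  have hsinΨ : 0 < Real.sin ((1 + α) * θ) := Real.sin_pos_of_pos_of_lt_pi (hθ₀.trans hθΨ) hΨ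
  have hlow := sin_mul_norm_mul_max_le_norm_oldroydSymbol_add hα₀.le hβ₀.le hβ₁.le ha.le hb.le
    hμ hlam.le hθ.le hΨ.le hz hargz
  have hmin := inv_max_one_le_min_one_rpow_neg_div ha hr α
  have hpow : ‖z‖ ^ (-2 : ℝ) + b * ‖z‖ ^ (β - 2) = (1 + b * ‖z‖ ^ β) / ‖z‖ ^ 2 := by
    rw [rpow_sub hr, rpow_neg hr.le, rpow_two]
    field_simp
  have hX : 0 < ‖oldroydSymbol a b μ α β z + lam‖ :=
    pos_of_mul_pos_right (lt_of_lt_of_le (by positivity) hlow) (by positivity)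
  rw [Real.sin_pi_sub, Real.sin_pi_sub, hpow]
  calc 1 / (‖z‖ * ‖oldroydSymbol a b μ α β z + lam‖)
      ≤ μ / (Real.sin θ * Real.sin ((1 + α) * θ)) * ((1 + b * ‖z‖ ^ β) / ‖z‖ ^ 2) *
          (max 1 (a * ‖z‖ ^ α))⁻¹ := by
        rw [div_le_iff₀ (by positivity)]
        field_simp
        have hM : 0 ≤ Real.sin ((1 + α) * θ) * (‖z‖ * max 1 (a * ‖z‖ ^ α)) := by positivity
        nlinarith [mul_le_of_le_one_left hM (Real.sin_le_one θ)]
    _ ≤ _ := mul_le_mul_of_nonneg_left hmin (by positivity)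
end
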